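/- Fix a finite set X of positive integers with |X| = m and an integer 0 ≤ k ≤ m with m − k even. Define a relation ⋖ on NCSP(X : k) by the two local moves described below. Then the transitive closure of ⋖ is a partial order on NCSP(X : k) with unique minimal element M_min(X : k), the matching pairing consecutive elements x₁,x₂; x₃,x₄; … ; x_{m−k−1},x_{m−k} (and their negatives) and making {±x_i} trivial for i > m − k. -/

import Mathlib

/-!
Every move strictly lowers the weight `∑ 4|x + y| + 2|x − y|` over the blocks `{x, y}`, so the
reflexive-transitive closure of `⋖` is antisymmetric. A move only rearranges the blocks of a
small symmetric piece of the matching, and the new blocks cross none of the remaining ones, so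
`NCSP(X : k)` is closed under moves. Finally, a matching admitting no move is `M_min(X : k)`: a
trivial element followed by a nontrivial one gives a move (i), and if the two smallest elements
are nontrivial but not paired with each other, their partners give a move (ii); so they are
paired, and induction on `|X|` applies to the rest. Descending along moves, which terminates by
the weight, therefore reaches `M_min(X : k)` from every matching.
-/

/-- `M` is a noncrossing symmetric perfect matching on `X ⊔ (−X)`. -/
def IsNCSP (X : Finset ℤ) (M : Finset (Finset ℤ)) : Prop :=
  (∀ b ∈ M, b.card = 2) ∧
  (∀ b ∈ M, ∀ x ∈ b, x ∈ X ∨ -x ∈ X) ∧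
  (∀ x : ℤ, (x ∈ X ∨ -x ∈ X) → ∃! b : Finset ℤ, b ∈ M ∧ x ∈ b) ∧
  (∀ b ∈ M, b.image (fun x => -x) ∈ M) ∧
  ¬∃ a b c d : ℤ, a < b ∧ b < c ∧ c < d ∧
    ({a, c} : Finset ℤ) ∈ M ∧ ({b, d} : Finset ℤ) ∈ M

/-- The number of trivial blocks `{−x, x}` of `M`. -/
def trivCount (X : Finset ℤ) (M : Finset (Finset ℤ)) : ℕ :=
  (X.filter (fun x => ({-x, x} : Finset ℤ) ∈ M)).card

/-- `a` and `b` are consecutive elements of `X` with `a < b`. -/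
def ConsecIn (X : Finset ℤ) (a b : ℤ) : Prop :=
  a ∈ X ∧ b ∈ X ∧ a < b ∧ ∀ x ∈ X, ¬(a < x ∧ x < b)

/-- First covering move: replace blocks `{±a}`, `±{b, c}` (with `a, b`
consecutive in `X` and `b < c`) by `±{a, b}`, `{±c}`. -/
def Move1 (X : Finset ℤ) (M N : Finset (Finset ℤ)) : Prop :=
  ∃ a b c : ℤ, ConsecIn X a b ∧ c ∈ X ∧ b < c ∧
    ({-a, a} : Finset ℤ) ∈ N ∧ ({b, c} : Finset ℤ) ∈ N ∧
    ({-b, -c} : Finset ℤ) ∈ N ∧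
    M = (N \ {({-a, a} : Finset ℤ), {b, c}, {-b, -c}}) ∪
      {({a, b} : Finset ℤ), {-a, -b}, {-c, c}}

/-- Second covering move: replace blocks `±{a, q}`, `±{b, p}` (with `a, b`
consecutive in `X` and `b < p < q`) by `±{a, b}`, `±{p, q}`, provided no block
of `N` consists of two positive elements straddling `a`. -/
def Move2 (X : Finset ℤ) (M N : Finset (Finset ℤ)) : Prop :=
  ∃ a b p q : ℤ, ConsecIn X a b ∧ p ∈ X ∧ q ∈ X ∧ b < p ∧ p < q ∧
    ({a, q} : Finset ℤ) ∈ N ∧ ({-a, -q} : Finset ℤ) ∈ N ∧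
    ({b, p} : Finset ℤ) ∈ N ∧ ({-b, -p} : Finset ℤ) ∈ N ∧
    (¬∃ u v : ℤ, ({u, v} : Finset ℤ) ∈ N ∧ 0 < u ∧ u < a ∧ a < v) ∧
    M = (N \ {({a, q} : Finset ℤ), {-a, -q}, {b, p}, {-b, -p}}) ∪
      {({a, b} : Finset ℤ), {-a, -b}, {p, q}, {-p, -q}}

/-- The covering relation `M ⋖ N`. -/
def LessDot (X : Finset ℤ) (M N : Finset (Finset ℤ)) : Prop :=
  Move1 X M N ∨ Move2 X M N

/-- Pair up consecutive entries of a list of positive integers, producing blocks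
`{a, b}` and `{−a, −b}`. -/
def pairUp : List ℤ → Finset (Finset ℤ)
  | a :: b :: rest =>
    insert ({a, b} : Finset ℤ) (insert ({-a, -b} : Finset ℤ) (pairUp rest))
  | _ => ∅

/-- The minimal matching `M_min(X : k)`: pair off the smallest `|X| − k`
elements of `X` consecutively, and make the largest `k` elements trivial. -/
def Mmin (X : Finset ℤ) (k : ℕ) : Finset (Finset ℤ) :=
  pairUp ((X.sort (· ≤ ·)).take (X.card - k)) ∪
    (((X.sort (· ≤ ·)).drop (X.card - k)).toFinset.image
      (fun x => ({-x, x} : Finset ℤ)))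

theorem Finset.pair_eq_pair_iff {α : Type*} [DecidableEq α] {a b c d : α} :
    ({a, b} : Finset α) = {c, d} ↔ a = c ∧ b = d ∨ a = d ∧ b = c := by
  rw [← Finset.coe_inj]; push_cast; exact Set.pair_eq_pair_iff

def Crosses (s t : Finset ℤ) : Prop :=
  ∃ a b c d : ℤ, a < b ∧ b < c ∧ c < d ∧ s = {a, c} ∧ t = {b, d}

theorem Crosses.min_max {u v x y : ℤ} (h : Crosses {u, v} {x, y}) :
    min u v < min x y ∧ min x y < max u v ∧ max u v < max x y := by
  obtain ⟨a, b, c, d, hab, hbc, hcd, hs, ht⟩ := h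
  rcases Finset.pair_eq_pair_iff.1 hs with ⟨rfl, rfl⟩ | ⟨rfl, rfl⟩ <;>
    rcases Finset.pair_eq_pair_iff.1 ht with ⟨rfl, rfl⟩ | ⟨rfl, rfl⟩ <;> omega

theorem not_crosses_pair {u v x y : ℤ}
    (h : ¬(min u v < min x y ∧ min x y < max u v ∧ max u v < max x y))
    (h' : ¬(min x y < min u v ∧ min u v < max x y ∧ max x y < max u v)) :
    ¬(Crosses {u, v} {x, y} ∨ Crosses {x, y} {u, v}) := by
  rintro (hc | hc)
  · exact h hc.min_max
  · exact h' hc.min_max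

theorem exists_of_crosses_pair {s : Finset ℤ} {x y : ℤ} (hxy : x < y)
    (h : Crosses {x, y} s ∨ Crosses s {x, y}) :
    ∃ w w', s = {w, w'} ∧ x < w ∧ w < y ∧ (w' < x ∨ y < w') := by
  rcases h with ⟨a, b, c, d, hab, hbc, hcd, hxy', rfl⟩ | ⟨a, b, c, d, hab, hbc, hcd, rfl, hxy'⟩
  · rcases Finset.pair_eq_pair_iff.1 hxy' with ⟨rfl, rfl⟩ | ⟨rfl, rfl⟩
    · exact ⟨b, d, rfl, hab, hbc, Or.inr hcd⟩
    · omega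
  · rcases Finset.pair_eq_pair_iff.1 hxy' with ⟨rfl, rfl⟩ | ⟨rfl, rfl⟩
    · exact ⟨c, a, Finset.pair_comm a c, hbc, hcd, Or.inl hab⟩
    · omega

namespace IsNCSP

variable {X : Finset ℤ} {N : Finset (Finset ℤ)}

theorem card_eq_two (hN : IsNCSP X N) {s : Finset ℤ} (hs : s ∈ N) : s.card = 2 :=
  hN.1 s hs

theorem mem_or_neg_mem (hN : IsNCSP X N) {s : Finset ℤ} (hs : s ∈ N) {w : ℤ} (hw : w ∈ s) :
    w ∈ X ∨ -w ∈ X :=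
  hN.2.1 s hs w hw

theorem eq_of_mem_of_mem (hN : IsNCSP X N) {s t : Finset ℤ} (hs : s ∈ N) (ht : t ∈ N)
    {w : ℤ} (hws : w ∈ s) (hwt : w ∈ t) : s = t :=
  (hN.2.2.1 w (hN.mem_or_neg_mem hs hws)).unique ⟨hs, hws⟩ ⟨ht, hwt⟩

theorem neg_mem (hN : IsNCSP X N) {u v : ℤ} (h : ({u, v} : Finset ℤ) ∈ N) :
    ({-u, -v} : Finset ℤ) ∈ N := by
  simpa using hN.2.2.2.1 _ h

theorem not_crosses (hN : IsNCSP X N) {s t : Finset ℤ} (hs : s ∈ N) (ht : t ∈ N) :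
    ¬Crosses s t := by
  rintro ⟨a, b, c, d, hab, hbc, hcd, rfl, rfl⟩
  exact hN.2.2.2.2 ⟨a, b, c, d, hab, hbc, hcd, hs, ht⟩

theorem exists_eq_pair (hN : IsNCSP X N) {s : Finset ℤ} (hs : s ∈ N) :
    ∃ u v, u < v ∧ s = {u, v} := by
  obtain ⟨a, c, hac, rfl⟩ := Finset.card_eq_two.1 (hN.card_eq_two hs)
  rcases lt_or_gt_of_ne hac with h | h
  · exact ⟨a, c, h, rfl⟩
  · exact ⟨c, a, h, Finset.pair_comm a c⟩

theorem exists_partner (hN : IsNCSP X N) {x : ℤ} (hx : x ∈ X) :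
    ∃ y, y ≠ x ∧ ({x, y} : Finset ℤ) ∈ N := by
  obtain ⟨s, ⟨hs, hxs⟩, -⟩ := hN.2.2.1 x (Or.inl hx)
  obtain ⟨u, v, huv, rfl⟩ := hN.exists_eq_pair hs
  simp only [Finset.mem_insert, Finset.mem_singleton] at hxs
  rcases hxs with rfl | rfl
  · exact ⟨v, huv.ne', hs⟩
  · exact ⟨u, huv.ne, Finset.pair_comm x u ▸ hs⟩

theorem lt_and_lt_of_lt_of_lt (hN : IsNCSP X N) {x y w w' : ℤ} (hxy : ({x, y} : Finset ℤ) ∈ N)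
    (hw : ({w, w'} : Finset ℤ) ∈ N) (hxw : x < w) (hwy : w < y) : x < w' ∧ w' < y := by
  have hne : ∀ z ∈ ({x, y} : Finset ℤ), w' ≠ z := by
    rintro z hz rfl
    have hwxy : w ∈ ({x, y} : Finset ℤ) := hN.eq_of_mem_of_mem hw hxy (by simp) hz ▸ (by simp)
    simp only [Finset.mem_insert, Finset.mem_singleton] at hwxy
    omega
  have hx := hne x (by simp)
  have hy := hne y (by simp)
  refine ⟨?_, ?_⟩
  · by_contra h
    exact hN.not_crosses hw hxy ⟨w', x, w, y, by omega, hxw, hwy, Finset.pair_comm w w', rfl⟩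
  · by_contra h
    exact hN.not_crosses hxy hw ⟨x, w, y, w', hxw, hwy, by omega, rfl, rfl⟩

theorem eq_neg_of_neg_of_pos (hN : IsNCSP X N) {u v : ℤ} (h : ({u, v} : Finset ℤ) ∈ N)
    (hu : u < 0) (hv : 0 < v) : v = -u := by
  have hneg : ({-v, -u} : Finset ℤ) ∈ N := Finset.pair_comm (-u) (-v) ▸ hN.neg_mem h
  rcases lt_trichotomy v (-u) with hlt | heq | hgt
  · have := hN.lt_and_lt_of_lt_of_lt h hneg (by omega) (by omega)
    omega
  · exact heq
  · have := hN.lt_and_lt_of_lt_of_lt hneg h (by omega) (by omega)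
    omega

end IsNCSP

section Gluing

variable {X Y : Finset ℤ} {M N S T : Finset (Finset ℤ)}

theorem not_mem_or_neg_mem_of_disjoint (hpos : ∀ x ∈ X ∪ Y, 0 < x) (hXY : Disjoint X Y)
    {z : ℤ} (hX : z ∈ X ∨ -z ∈ X) : ¬(z ∈ Y ∨ -z ∈ Y) := by
  have hpos' : ∀ x, x ∈ X ∨ x ∈ Y → 0 < x := fun x hx => hpos x (Finset.mem_union.2 hx)
  rintro (hY | hY) <;> rcases hX with hX | hX
  · exact Finset.disjoint_left.1 hXY hX hY
  · have := hpos' _ (Or.inl hX); have := hpos' _ (Or.inr hY); omega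
  · have := hpos' _ (Or.inl hX); have := hpos' _ (Or.inr hY); omega
  · exact Finset.disjoint_left.1 hXY hX hY

theorem IsNCSP.union (hpos : ∀ x ∈ X ∪ Y, 0 < x) (hXY : Disjoint X Y) (hM : IsNCSP X M)
    (hN : IsNCSP Y N) (hcross : ∀ s ∈ M, ∀ t ∈ N, ¬(Crosses s t ∨ Crosses t s)) :
    IsNCSP (X ∪ Y) (M ∪ N) := by
  have sepXY := @not_mem_or_neg_mem_of_disjoint X Y hpos hXY
  refine ⟨?_, ?_, ?_, ?_, ?_⟩
  · intro s hs
    rcases Finset.mem_union.1 hs with hs | hs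
    exacts [hM.card_eq_two hs, hN.card_eq_two hs]
  · intro s hs w hw
    simp only [Finset.mem_union]
    rcases Finset.mem_union.1 hs with hs | hs
    · rcases hM.mem_or_neg_mem hs hw with h | h <;> tauto
    · rcases hN.mem_or_neg_mem hs hw with h | h <;> tauto
  · intro z hz
    simp only [Finset.mem_union] at hz
    by_cases hzX : z ∈ X ∨ -z ∈ X
    · obtain ⟨s, ⟨hs, hzs⟩, -⟩ := hM.2.2.1 z hzX
      refine ⟨s, ⟨Finset.mem_union_left _ hs, hzs⟩, fun t ⟨ht, hzt⟩ => ?_⟩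
      rcases Finset.mem_union.1 ht with ht | ht
      · exact hM.eq_of_mem_of_mem ht hs hzt hzs
      · exact absurd (hN.mem_or_neg_mem ht hzt) (sepXY hzX)
    · have hzY : z ∈ Y ∨ -z ∈ Y := by tauto
      obtain ⟨s, ⟨hs, hzs⟩, -⟩ := hN.2.2.1 z hzY
      refine ⟨s, ⟨Finset.mem_union_right _ hs, hzs⟩, fun t ⟨ht, hzt⟩ => ?_⟩
      rcases Finset.mem_union.1 ht with ht | ht
      · exact absurd (hM.mem_or_neg_mem ht hzt) hzX
      · exact hN.eq_of_mem_of_mem ht hs hzt hzs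
  · intro s hs
    rcases Finset.mem_union.1 hs with hs | hs
    · exact Finset.mem_union_left _ (hM.2.2.2.1 s hs)
    · exact Finset.mem_union_right _ (hN.2.2.2.1 s hs)
  · rintro ⟨a, b, c, d, hab, hbc, hcd, hac, hbd⟩
    have hcr : Crosses {a, c} {b, d} := ⟨a, b, c, d, hab, hbc, hcd, rfl, rfl⟩
    rcases Finset.mem_union.1 hac with hac | hac <;> rcases Finset.mem_union.1 hbd with hbd | hbd
    · exact hM.not_crosses hac hbd hcr
    · exact hcross _ hac _ hbd (Or.inl hcr)
    · exact hcross _ hbd _ hac (Or.inr hcr)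
    · exact hN.not_crosses hac hbd hcr

theorem trivCount_union (hpos : ∀ x ∈ X ∪ Y, 0 < x) (hXY : Disjoint X Y) (hM : IsNCSP X M)
    (hN : IsNCSP Y N) : trivCount (X ∪ Y) (M ∪ N) = trivCount X M + trivCount Y N := by
  have hX : ∀ x ∈ X, ({-x, x} : Finset ℤ) ∈ M ∪ N ↔ ({-x, x} : Finset ℤ) ∈ M := fun x hx => by
    refine ⟨fun h => (Finset.mem_union.1 h).resolve_right fun hxN => ?_, Finset.mem_union_left _⟩
    exact not_mem_or_neg_mem_of_disjoint hpos hXY (Or.inl hx) (hN.mem_or_neg_mem hxN (by simp))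
  have hY : ∀ y ∈ Y, ({-y, y} : Finset ℤ) ∈ M ∪ N ↔ ({-y, y} : Finset ℤ) ∈ N := fun y hy => by
    refine ⟨fun h => (Finset.mem_union.1 h).resolve_left fun hyM => ?_, Finset.mem_union_right _⟩
    exact not_mem_or_neg_mem_of_disjoint hpos hXY (hM.mem_or_neg_mem hyM (by simp)) (Or.inl hy)
  rw [trivCount, Finset.filter_union, Finset.card_union_of_disjoint
    (Finset.disjoint_filter_filter hXY), Finset.filter_congr hX, Finset.filter_congr hY]
  rfl

theorem IsNCSP.not_mem_of_mem_sdiff (hN : IsNCSP X N)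
    (hS : IsNCSP Y S) (hSN : S ⊆ N) {s : Finset ℤ} (hs : s ∈ N \ S) {w : ℤ} (hw : w ∈ s) :
    ¬(w ∈ Y ∨ -w ∈ Y) := fun hwY => by
  obtain ⟨t, ⟨ht, hwt⟩, -⟩ := hS.2.2.1 w hwY
  obtain ⟨hsN, hsS⟩ := Finset.mem_sdiff.1 hs
  exact hsS (hN.eq_of_mem_of_mem (hSN ht) hsN hwt hw ▸ ht)

theorem IsNCSP.sdiff (hpos : ∀ x ∈ Y ∪ X, 0 < x) (hXY : Disjoint Y X) (hN : IsNCSP (Y ∪ X) N)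
    (hS : IsNCSP Y S) (hSN : S ⊆ N) : IsNCSP X (N \ S) := by
  refine ⟨fun s hs => hN.card_eq_two (Finset.sdiff_subset hs), ?_, ?_, ?_, ?_⟩
  · intro s hs w hw
    have hwY := hN.not_mem_of_mem_sdiff hS hSN hs hw
    have := hN.mem_or_neg_mem (Finset.sdiff_subset hs) hw
    simp only [Finset.mem_union] at this
    tauto
  · intro z hz
    obtain ⟨s, ⟨hs, hzs⟩, hsu⟩ := hN.2.2.1 z (by simp only [Finset.mem_union]; tauto)
    have hsS : s ∉ S := fun hsS => not_mem_or_neg_mem_of_disjoint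
      (Finset.union_comm Y X ▸ hpos) hXY.symm hz (hS.mem_or_neg_mem hsS hzs)
    exact ⟨s, ⟨Finset.mem_sdiff.2 ⟨hs, hsS⟩, hzs⟩,
      fun t ⟨ht, hzt⟩ => hsu t ⟨Finset.sdiff_subset ht, hzt⟩⟩
  · intro s hs
    refine Finset.mem_sdiff.2 ⟨hN.2.2.2.1 s (Finset.sdiff_subset hs), fun hsS => ?_⟩
    have := hS.2.2.2.1 _ hsS
    rw [Finset.image_image, show (fun x : ℤ => -x) ∘ (fun x => -x) = id from funext neg_neg,
      Finset.image_id] at this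
    exact (Finset.mem_sdiff.1 hs).2 this
  · rintro ⟨a, b, c, d, hab, hbc, hcd, hac, hbd⟩
    exact hN.2.2.2.2 ⟨a, b, c, d, hab, hbc, hcd, Finset.sdiff_subset hac, Finset.sdiff_subset hbd⟩

end Gluing

def pairMatching (a b : ℤ) : Finset (Finset ℤ) := {{a, b}, {-a, -b}}

theorem isNCSP_pairMatching {a b : ℤ} (ha : 0 < a) (hab : a < b) :
    IsNCSP {a, b} (pairMatching a b) := by
  refine ⟨?_, ?_, ?_, ?_, ?_⟩
  · simp only [pairMatching, Finset.mem_insert, Finset.mem_singleton]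
    rintro s (rfl | rfl) <;> exact Finset.card_pair (by omega)
  · simp only [pairMatching, Finset.mem_insert, Finset.mem_singleton]
    rintro s (rfl | rfl) w hw <;> simp only [Finset.mem_insert, Finset.mem_singleton] at hw <;>
      omega
  · intro z hz
    simp only [Finset.mem_insert, Finset.mem_singleton] at hz
    have hblock : ∀ s ∈ pairMatching a b, z ∈ s → s = if 0 < z then {a, b} else {-a, -b} := by
      simp only [pairMatching, Finset.mem_insert, Finset.mem_singleton]
      rintro s (rfl | rfl) hzs <;> simp only [Finset.mem_insert, Finset.mem_singleton] at hzs <;>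
        split_ifs <;> first | rfl | omega
    refine ⟨if 0 < z then {a, b} else {-a, -b}, ⟨?_, ?_⟩, fun s ⟨hs, hzs⟩ => hblock s hs hzs⟩ <;>
      split_ifs <;> simp [pairMatching] <;> omega
  · simp only [pairMatching, Finset.mem_insert, Finset.mem_singleton]
    rintro s (rfl | rfl) <;> simp
  · rintro ⟨a', b', c', d', h1, h2, h3, hac, hbd⟩
    simp only [pairMatching, Finset.mem_insert, Finset.mem_singleton] at hac hbd
    rcases hac with hac | hac <;> rcases hbd with hbd | hbd <;>
      rcases Finset.pair_eq_pair_iff.1 hac with ⟨rfl, rfl⟩ | ⟨rfl, rfl⟩ <;>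
      rcases Finset.pair_eq_pair_iff.1 hbd with ⟨h4, h5⟩ | ⟨h4, h5⟩ <;> omega

theorem trivCount_pairMatching {a b : ℤ} (ha : 0 < a) (hab : a < b) :
    trivCount {a, b} (pairMatching a b) = 0 := by
  rw [trivCount, Finset.card_eq_zero, Finset.filter_eq_empty_iff]
  intro x hx hxN
  simp only [pairMatching, Finset.mem_insert, Finset.mem_singleton] at hx hxN
  rcases hxN with h | h <;> rcases Finset.pair_eq_pair_iff.1 h with ⟨h1, h2⟩ | ⟨h1, h2⟩ <;> omega

theorem isNCSP_singleton {a : ℤ} (ha : 0 < a) : IsNCSP {a} {{-a, a}} := by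
  refine ⟨?_, ?_, ?_, ?_, ?_⟩
  · simp only [Finset.mem_singleton]
    rintro s rfl
    exact Finset.card_pair (by omega)
  · simp only [Finset.mem_singleton]
    rintro s rfl w hw
    simp only [Finset.mem_insert, Finset.mem_singleton] at hw
    omega
  · intro z hz
    refine ⟨{-a, a}, ⟨Finset.mem_singleton_self _, ?_⟩, fun s ⟨hs, _⟩ => Finset.mem_singleton.1 hs⟩
    simp only [Finset.mem_insert, Finset.mem_singleton] at hz ⊢
    omega
  · simp only [Finset.mem_singleton]
    rintro s rfl
    simp [Finset.pair_comm]
  · rintro ⟨a', b', c', d', h1, h2, h3, hac, hbd⟩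
    rcases Finset.pair_eq_pair_iff.1 (Finset.mem_singleton.1 hac) with ⟨rfl, rfl⟩ | ⟨rfl, rfl⟩ <;>
      rcases Finset.pair_eq_pair_iff.1 (Finset.mem_singleton.1 hbd) with ⟨h4, h5⟩ | ⟨h4, h5⟩ <;>
      omega

theorem trivCount_singleton (a : ℤ) : trivCount {a} {{-a, a}} = 1 := by
  simp [trivCount, Finset.filter_singleton]

theorem isNCSP_and_trivCount_image {X : Finset ℤ} (hpos : ∀ x ∈ X, 0 < x) :
    IsNCSP X (X.image fun x => {-x, x}) ∧ trivCount X (X.image fun x => {-x, x}) = X.card := by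
  induction X using Finset.induction_on with
  | empty =>
    refine ⟨⟨by simp, by simp, by simp, by simp, by simp⟩, by simp [trivCount]⟩
  | insert a X haX ih =>
    have hpos' : ∀ x ∈ {a} ∪ X, 0 < x := by simpa [← Finset.insert_eq] using hpos
    have ha : 0 < a := hpos a (Finset.mem_insert_self a X)
    obtain ⟨hX, htc⟩ := ih fun x hx => hpos x (Finset.mem_insert_of_mem hx)
    have hdisj : Disjoint {a} X := Finset.disjoint_singleton_left.2 haX
    rw [Finset.image_insert, Finset.insert_eq a X, Finset.insert_eq {-a, a}]
    refine ⟨(isNCSP_singleton ha).union hpos' hdisj hX ?_, ?_⟩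
    · rintro s hs t ht
      obtain rfl := Finset.mem_singleton.1 hs
      obtain ⟨x, hx, rfl⟩ := Finset.mem_image.1 ht
      have := hpos x (Finset.mem_insert_of_mem hx)
      have : x ≠ a := fun h => haX (h ▸ hx)
      exact not_crosses_pair (by omega) (by omega)
    · rw [trivCount_union hpos' hdisj (isNCSP_singleton ha) hX, trivCount_singleton, htc,
        Finset.card_union_of_disjoint hdisj, Finset.card_singleton]

theorem Finset.exists_eq_pair_union {α : Type*} [LinearOrder α] {X : Finset α}
    (h : 2 ≤ X.card) :
    ∃ a b X', a < b ∧ (∀ x ∈ X', b < x) ∧ X = {a, b} ∪ X' ∧ X'.card + 2 = X.card := by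
  have hX : X.Nonempty := Finset.card_pos.1 (by omega)
  have ha := X.min'_mem hX
  have hX1 : (X.erase (X.min' hX)).Nonempty :=
    Finset.card_pos.1 (by rw [Finset.card_erase_of_mem ha]; omega)
  have hb := (X.erase (X.min' hX)).min'_mem hX1
  refine ⟨X.min' hX, (X.erase (X.min' hX)).min' hX1,
    (X.erase (X.min' hX)).erase ((X.erase (X.min' hX)).min' hX1), ?_, fun x hx => ?_, ?_, ?_⟩
  · exact lt_of_le_of_ne (X.min'_le _ (Finset.mem_of_mem_erase hb)) (Finset.ne_of_mem_erase hb).symm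
  · exact lt_of_le_of_ne (Finset.min'_le _ _ (Finset.mem_of_mem_erase hx))
      (Finset.ne_of_mem_erase hx).symm
  · rw [Finset.insert_union, Finset.singleton_union, Finset.insert_erase hb,
      Finset.insert_erase ha]
  · rw [Finset.card_erase_of_mem hb, Finset.card_erase_of_mem ha]
    omega

theorem consecIn_pair_union {a b : ℤ} {X : Finset ℤ} (hab : a < b) (hb : ∀ x ∈ X, b < x) :
    ConsecIn ({a, b} ∪ X) a b := by
  refine ⟨by simp, by simp, hab, fun x hx => ?_⟩
  simp only [Finset.mem_union, Finset.mem_insert, Finset.mem_singleton] at hx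
  rcases hx with (rfl | rfl) | hx
  · omega
  · omega
  · have := hb x hx; omega

theorem ConsecIn.not_lt_and_lt {X : Finset ℤ} {a b w : ℤ} (hpos : ∀ x ∈ X, 0 < x)
    (hab : ConsecIn X a b) (hw : w ∈ X ∨ -w ∈ X) : ¬(a < w ∧ w < b) ∧ ¬(-b < w ∧ w < -a) := by
  have ha := hpos a hab.1
  rcases hw with h | h
  · exact ⟨hab.2.2.2 w h, by have := hpos w h; omega⟩
  · exact ⟨by have := hpos _ h; omega, fun h' => hab.2.2.2 (-w) h ⟨by omega, by omega⟩⟩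

theorem ConsecIn.not_crosses {X : Finset ℤ} {a b : ℤ} (hpos : ∀ x ∈ X, 0 < x)
    (hab : ConsecIn X a b) {s : Finset ℤ} (hs : ∀ w ∈ s, w ∈ X ∨ -w ∈ X) {p : Finset ℤ}
    (hp : p ∈ pairMatching a b) : ¬(Crosses p s ∨ Crosses s p) := by
  have key : ∀ w ∈ s, ¬(a < w ∧ w < b) ∧ ¬(-b < w ∧ w < -a) := fun w hw =>
    hab.not_lt_and_lt hpos (hs w hw)
  simp only [pairMatching, Finset.mem_insert, Finset.mem_singleton] at hp
  rcases hp with rfl | rfl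
  · intro h
    obtain ⟨w, w', rfl, h1, h2, -⟩ := exists_of_crosses_pair hab.2.2.1 h
    exact (key w (by simp)).1 ⟨h1, h2⟩
  · rw [Finset.pair_comm]
    intro h
    obtain ⟨w, w', rfl, h1, h2, -⟩ := exists_of_crosses_pair (neg_lt_neg hab.2.2.1) h
    exact (key w (by simp)).2 ⟨h1, h2⟩

theorem Mmin_of_card_eq {X : Finset ℤ} {k : ℕ} (h : X.card = k) :
    Mmin X k = X.image fun x => {-x, x} := by
  simp [Mmin, h, pairUp, Finset.sort_toFinset]

theorem Mmin_pair_union {a b : ℤ} {X : Finset ℤ} {k : ℕ} (hab : a < b) (hb : ∀ x ∈ X, b < x)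
    (hk : k ≤ X.card) : Mmin ({a, b} ∪ X) k = pairMatching a b ∪ Mmin X k := by
  have hbX : b ∉ X := fun h => (hb b h).false
  have haX : a ∉ insert b X := by
    simp only [Finset.mem_insert, not_or]
    exact ⟨hab.ne, fun h => (hab.trans (hb a h)).false⟩
  have hunion : ({a, b} ∪ X : Finset ℤ) = insert a (insert b X) := by
    rw [Finset.insert_union, Finset.singleton_union]
  have hsort : ({a, b} ∪ X).sort (· ≤ ·) = a :: b :: X.sort (· ≤ ·) := by
    rw [hunion, Finset.sort_insert _ _ haX, Finset.sort_insert _ _ hbX]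
    · exact fun x hx => (hb x hx).le
    · simp only [Finset.mem_insert]
      rintro x (rfl | hx)
      exacts [hab.le, (hab.trans (hb x hx)).le]
  have hcard : ({a, b} ∪ X).card = X.card - k + 1 + 1 + k := by
    rw [hunion, Finset.card_insert_of_notMem haX, Finset.card_insert_of_notMem hbX]
    omega
  rw [Mmin, Mmin, hsort, hcard, Nat.add_sub_cancel, List.take_succ_cons, List.take_succ_cons,
    List.drop_succ_cons, List.drop_succ_cons, pairUp, pairMatching, Finset.insert_union,
    Finset.insert_union, Finset.insert_union, Finset.singleton_union]

theorem disjoint_pair_of_lt {a b : ℤ} {X : Finset ℤ} (hab : a < b) (hb : ∀ x ∈ X, b < x) :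
    Disjoint {a, b} X := by
  simp only [Finset.disjoint_insert_left, Finset.disjoint_singleton_left]
  exact ⟨fun h => (hab.trans (hb a h)).false, fun h => (hb b h).false⟩

theorem isNCSP_and_trivCount_Mmin {X : Finset ℤ} {k n : ℕ} (hpos : ∀ x ∈ X, 0 < x)
    (hcard : X.card = k + 2 * n) : IsNCSP X (Mmin X k) ∧ trivCount X (Mmin X k) = k := by
  induction n generalizing X with
  | zero =>
    rw [Mmin_of_card_eq (by omega), ← (by omega : X.card = k)]
    exact isNCSP_and_trivCount_image hpos
  | succ n ih =>
    obtain ⟨a, b, X, hab, hb, rfl, hcard'⟩ := Finset.exists_eq_pair_union (X := X) (by omega)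
    have ha : 0 < a := hpos a (by simp)
    have hdisj := disjoint_pair_of_lt hab hb
    obtain ⟨hX, htc⟩ := ih (fun x hx => hpos x (Finset.mem_union_right _ hx)) (by omega)
    rw [Mmin_pair_union hab hb (by omega)]
    refine ⟨(isNCSP_pairMatching ha hab).union hpos hdisj hX fun p hp s hs => ?_, ?_⟩
    · refine (consecIn_pair_union hab hb).not_crosses hpos (fun w hw => ?_) hp
      simp only [Finset.mem_union]
      have := hX.mem_or_neg_mem hs hw
      tauto
    · rw [trivCount_union hpos hdisj (isNCSP_pairMatching ha hab) hX,
        trivCount_pairMatching ha hab, htc, zero_add]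

theorem isNCSP_move1_before {a b c : ℤ} (ha : 0 < a) (hab : a < b) (hbc : b < c) :
    IsNCSP {a, b, c} {{-a, a}, {b, c}, {-b, -c}} ∧
      trivCount {a, b, c} {{-a, a}, {b, c}, {-b, -c}} = 1 := by
  have hpos : ∀ x ∈ ({a} ∪ {b, c} : Finset ℤ), 0 < x := by simp; omega
  have hdisj : Disjoint ({a} : Finset ℤ) {b, c} := by simp; omega
  rw [← Finset.singleton_union]
  rw [show ({{-a, a}, {b, c}, {-b, -c}} : Finset (Finset ℤ)) = {{-a, a}} ∪ pairMatching b c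
    from (Finset.singleton_union _ _).symm]
  have h1 := isNCSP_singleton ha
  have h2 := isNCSP_pairMatching (by omega) hbc
  refine ⟨h1.union hpos hdisj h2 ?_, ?_⟩
  · simp only [pairMatching, Finset.mem_insert, Finset.mem_singleton]
    rintro s rfl t (rfl | rfl) <;> exact not_crosses_pair (by omega) (by omega)
  · rw [trivCount_union hpos hdisj h1 h2, trivCount_singleton,
      trivCount_pairMatching (by omega) hbc]

theorem isNCSP_move1_after {a b c : ℤ} (ha : 0 < a) (hab : a < b) (hbc : b < c) :
    IsNCSP {a, b, c} {{a, b}, {-a, -b}, {-c, c}} ∧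
      trivCount {a, b, c} {{a, b}, {-a, -b}, {-c, c}} = 1 := by
  have hpos : ∀ x ∈ ({a, b} ∪ {c} : Finset ℤ), 0 < x := by simp; omega
  have hdisj : Disjoint ({a, b} : Finset ℤ) {c} := by simp; omega
  rw [show ({a, b, c} : Finset ℤ) = {a, b} ∪ {c} by
      rw [Finset.insert_union, Finset.singleton_union],
    show ({{a, b}, {-a, -b}, {-c, c}} : Finset (Finset ℤ)) = pairMatching a b ∪ {{-c, c}} by
      rw [pairMatching, Finset.insert_union, Finset.singleton_union]]
  have h1 := isNCSP_pairMatching ha hab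
  have h2 := isNCSP_singleton (by omega : 0 < c)
  refine ⟨h1.union hpos hdisj h2 ?_, ?_⟩
  · simp only [pairMatching, Finset.mem_insert, Finset.mem_singleton]
    rintro s (rfl | rfl) t rfl <;> exact not_crosses_pair (by omega) (by omega)
  · rw [trivCount_union hpos hdisj h1 h2, trivCount_singleton, trivCount_pairMatching ha hab]

theorem isNCSP_move2_before {a b p q : ℤ} (ha : 0 < a) (hab : a < b) (hbp : b < p)
    (hpq : p < q) :
    IsNCSP {a, q, b, p} {{a, q}, {-a, -q}, {b, p}, {-b, -p}} ∧
      trivCount {a, q, b, p} {{a, q}, {-a, -q}, {b, p}, {-b, -p}} = 0 := by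
  have hpos : ∀ x ∈ ({a, q} ∪ {b, p} : Finset ℤ), 0 < x := by simp; omega
  have hdisj : Disjoint ({a, q} : Finset ℤ) {b, p} := by simp; omega
  rw [show ({a, q, b, p} : Finset ℤ) = {a, q} ∪ {b, p} by
      rw [Finset.insert_union, Finset.singleton_union],
    show ({{a, q}, {-a, -q}, {b, p}, {-b, -p}} : Finset (Finset ℤ)) =
      pairMatching a q ∪ pairMatching b p by
      rw [pairMatching, Finset.insert_union, Finset.singleton_union]; rfl]
  have h1 := isNCSP_pairMatching ha (by omega : a < q)
  have h2 := isNCSP_pairMatching (by omega) hbp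
  refine ⟨h1.union hpos hdisj h2 ?_, ?_⟩
  · simp only [pairMatching, Finset.mem_insert, Finset.mem_singleton]
    rintro s (rfl | rfl) t (rfl | rfl) <;> exact not_crosses_pair (by omega) (by omega)
  · rw [trivCount_union hpos hdisj h1 h2, trivCount_pairMatching ha (by omega),
      trivCount_pairMatching (by omega) hbp]

theorem isNCSP_move2_after {a b p q : ℤ} (ha : 0 < a) (hab : a < b) (hbp : b < p)
    (hpq : p < q) :
    IsNCSP {a, q, b, p} {{a, b}, {-a, -b}, {p, q}, {-p, -q}} ∧
      trivCount {a, q, b, p} {{a, b}, {-a, -b}, {p, q}, {-p, -q}} = 0 := by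
  have hpos : ∀ x ∈ ({a, b} ∪ {p, q} : Finset ℤ), 0 < x := by simp; omega
  have hdisj : Disjoint ({a, b} : Finset ℤ) {p, q} := by simp; omega
  rw [show ({a, q, b, p} : Finset ℤ) = {a, b} ∪ {p, q} by
      ext x; simp only [Finset.mem_insert, Finset.mem_union, Finset.mem_singleton]; tauto,
    show ({{a, b}, {-a, -b}, {p, q}, {-p, -q}} : Finset (Finset ℤ)) =
      pairMatching a b ∪ pairMatching p q by
      rw [pairMatching, Finset.insert_union, Finset.singleton_union]; rfl]
  have h1 := isNCSP_pairMatching ha hab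
  have h2 := isNCSP_pairMatching (by omega) hpq
  refine ⟨h1.union hpos hdisj h2 ?_, ?_⟩
  · simp only [pairMatching, Finset.mem_insert, Finset.mem_singleton]
    rintro s (rfl | rfl) t (rfl | rfl) <;> exact not_crosses_pair (by omega) (by omega)
  · rw [trivCount_union hpos hdisj h1 h2, trivCount_pairMatching ha hab,
      trivCount_pairMatching (by omega) hpq]

section Moves

variable {X Y : Finset ℤ} {M N S T : Finset (Finset ℤ)}

theorem IsNCSP.sdiff_union (hpos : ∀ x ∈ X, 0 < x) (hN : IsNCSP X N) (hYX : Y ⊆ X)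
    (hS : IsNCSP Y S) (hT : IsNCSP Y T) (hSN : S ⊆ N)
    (hcross : ∀ s ∈ N \ S, ∀ t ∈ T, ¬(Crosses s t ∨ Crosses t s)) : IsNCSP X (N \ S ∪ T) := by
  rw [← Finset.union_sdiff_of_subset hYX] at hpos hN ⊢
  rw [Finset.union_comm (N \ S) T]
  exact hT.union hpos Finset.disjoint_sdiff (hN.sdiff hpos Finset.disjoint_sdiff hS hSN)
    fun t ht s hs h => hcross s hs t ht h.symm

theorem trivCount_sdiff_union (hpos : ∀ x ∈ X, 0 < x) (hN : IsNCSP X N) (hYX : Y ⊆ X)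
    (hS : IsNCSP Y S) (hT : IsNCSP Y T) (hSN : S ⊆ N) (htc : trivCount Y T = trivCount Y S) :
    trivCount X (N \ S ∪ T) = trivCount X N := by
  rw [← Finset.union_sdiff_of_subset hYX] at hpos hN ⊢
  have hrest := hN.sdiff hpos Finset.disjoint_sdiff hS hSN
  conv_rhs => rw [← Finset.union_sdiff_of_subset hSN]
  rw [Finset.union_comm (N \ S) T, trivCount_union hpos Finset.disjoint_sdiff hT hrest,
    trivCount_union hpos Finset.disjoint_sdiff hS hrest, htc]

theorem Move1.isNCSP_and_trivCount_eq (hpos : ∀ x ∈ X, 0 < x) (hN : IsNCSP X N) (h : Move1 X M N) :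
    IsNCSP X M ∧ trivCount X M = trivCount X N := by
  obtain ⟨a, b, c, hab, hcX, hbc, hA, hB, hB', rfl⟩ := h
  have ha := hpos a hab.1
  have hab' := hab.2.2.1
  have hYX : {a, b, c} ⊆ X := by
    simp only [Finset.insert_subset_iff, Finset.singleton_subset_iff]
    exact ⟨hab.1, hab.2.1, hcX⟩
  have hS := isNCSP_move1_before ha hab' hbc
  have hT := isNCSP_move1_after ha hab' hbc
  have hSN : ({{-a, a}, {b, c}, {-b, -c}} : Finset (Finset ℤ)) ⊆ N := by
    simp only [Finset.insert_subset_iff, Finset.singleton_subset_iff]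
    exact ⟨hA, hB, hB'⟩
  refine ⟨hN.sdiff_union hpos hYX hS.1 hT.1 hSN fun s hs t ht => ?_,
    trivCount_sdiff_union hpos hN hYX hS.1 hT.1 hSN (hT.2.trans hS.2.symm)⟩
  have hsN := (Finset.mem_sdiff.1 hs).1
  simp only [Finset.mem_insert, Finset.mem_singleton] at ht
  rcases ht with rfl | rfl | rfl
  · exact fun h => hab.not_crosses hpos (fun w => hN.mem_or_neg_mem hsN)
      (by simp [pairMatching]) h.symm
  · exact fun h => hab.not_crosses hpos (fun w => hN.mem_or_neg_mem hsN)
      (by simp [pairMatching]) h.symm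
  -- The inner endpoint avoids `(−a, a)`, `(b, c)`, `(−c, −b)` by nesting and `(a, b)`, `(−b, −a)`
  -- by consecutiveness, which leaves it no room in `(−c, c)`.
  intro h
  obtain ⟨w, w', rfl, h1, h2, hout⟩ := exists_of_crosses_pair (by omega : -c < c) h.symm
  have hw := hN.not_mem_of_mem_sdiff hS.1 hSN hs (by simp : w ∈ ({w, w'} : Finset ℤ))
  simp only [Finset.mem_insert, Finset.mem_singleton] at hw
  have hgap := hab.not_lt_and_lt hpos (hN.mem_or_neg_mem hsN (w := w) (by simp))
  have hnA : ¬(-a < w ∧ w < a) := fun h => by have := hN.lt_and_lt_of_lt_of_lt hA hsN h.1 h.2; omega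
  have hnB : ¬(b < w ∧ w < c) := fun h => by have := hN.lt_and_lt_of_lt_of_lt hB hsN h.1 h.2; omega
  have hnB' : ¬(-c < w ∧ w < -b) := fun h => by
    have := hN.lt_and_lt_of_lt_of_lt (Finset.pair_comm (-b) (-c) ▸ hB') hsN h.1 h.2; omega
  omega

theorem Move2.isNCSP_and_trivCount_eq (hpos : ∀ x ∈ X, 0 < x) (hN : IsNCSP X N) (h : Move2 X M N) :
    IsNCSP X M ∧ trivCount X M = trivCount X N := by
  obtain ⟨a, b, p, q, hab, hpX, hqX, hbp, hpq, hA, hA', hB, hB', -, rfl⟩ := h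
  have ha := hpos a hab.1
  have hab' := hab.2.2.1
  have hYX : {a, q, b, p} ⊆ X := by
    simp only [Finset.insert_subset_iff, Finset.singleton_subset_iff]
    exact ⟨hab.1, hqX, hab.2.1, hpX⟩
  have hS := isNCSP_move2_before ha hab' hbp hpq
  have hT := isNCSP_move2_after ha hab' hbp hpq
  have hSN : ({{a, q}, {-a, -q}, {b, p}, {-b, -p}} : Finset (Finset ℤ)) ⊆ N := by
    simp only [Finset.insert_subset_iff, Finset.singleton_subset_iff]
    exact ⟨hA, hA', hB, hB'⟩
  refine ⟨hN.sdiff_union hpos hYX hS.1 hT.1 hSN fun s hs t ht => ?_,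
    trivCount_sdiff_union hpos hN hYX hS.1 hT.1 hSN (hT.2.trans hS.2.symm)⟩
  have hsN := (Finset.mem_sdiff.1 hs).1
  simp only [Finset.mem_insert, Finset.mem_singleton] at ht
  have hgap : ∀ w ∈ s, ¬(a < w ∧ w < b) ∧ ¬(-b < w ∧ w < -a) := fun w hw =>
    hab.not_lt_and_lt hpos (hN.mem_or_neg_mem hsN hw)
  rcases ht with rfl | rfl | rfl | rfl
  · exact fun h => hab.not_crosses hpos (fun w => hN.mem_or_neg_mem hsN)
      (by simp [pairMatching]) h.symm
  · exact fun h => hab.not_crosses hpos (fun w => hN.mem_or_neg_mem hsN)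
      (by simp [pairMatching]) h.symm
  -- The outer endpoint is trapped inside `{a, q}` but outside `{b, p}`, hence between `a` and `b`.
  · intro h
    obtain ⟨w, w', rfl, h1, h2, hout⟩ := exists_of_crosses_pair hpq h.symm
    have hw' := hN.not_mem_of_mem_sdiff hS.1 hSN hs (by simp : w' ∈ ({w, w'} : Finset ℤ))
    simp only [Finset.mem_insert, Finset.mem_singleton] at hw'
    have hin := hN.lt_and_lt_of_lt_of_lt hA hsN (by omega) h2
    have hnB : ¬(b < w' ∧ w' < p) := fun h => by
      have := hN.lt_and_lt_of_lt_of_lt hB (Finset.pair_comm w w' ▸ hsN) h.1 h.2; omega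
    have := hgap w' (by simp)
    omega
  · intro h
    obtain ⟨w, w', rfl, h1, h2, hout⟩ :=
      exists_of_crosses_pair (by omega : -q < -p) (Finset.pair_comm (-p) (-q) ▸ h.symm)
    have hw' := hN.not_mem_of_mem_sdiff hS.1 hSN hs (by simp : w' ∈ ({w, w'} : Finset ℤ))
    simp only [Finset.mem_insert, Finset.mem_singleton] at hw'
    have hin := hN.lt_and_lt_of_lt_of_lt (Finset.pair_comm (-a) (-q) ▸ hA') hsN h1 (by omega)
    have hnB : ¬(-p < w' ∧ w' < -b) := fun h => by
      have := hN.lt_and_lt_of_lt_of_lt (Finset.pair_comm (-b) (-p) ▸ hB')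
        (Finset.pair_comm w w' ▸ hsN) h.1 h.2
      omega
    have := hgap w' (by simp)
    omega

theorem LessDot.isNCSP_and_trivCount_eq (hpos : ∀ x ∈ X, 0 < x) (hN : IsNCSP X N)
    (h : LessDot X M N) : IsNCSP X M ∧ trivCount X M = trivCount X N :=
  h.elim (Move1.isNCSP_and_trivCount_eq hpos hN) (Move2.isNCSP_and_trivCount_eq hpos hN)

end Moves

/-- For a block `{x, y}` this is `4|x + y| + 2|x − y|`: move (i) trades `8(c − a)` of the first
term for `4(b − a)` of the second, and move (ii) keeps the first term while lowering the second
by `4(p − b)`. -/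
def blockWeight (s : Finset ℤ) : ℕ :=
  4 * (∑ x ∈ s, x).natAbs + ∑ x ∈ s, ∑ y ∈ s, (x - y).natAbs

def weight (N : Finset (Finset ℤ)) : ℕ := ∑ s ∈ N, blockWeight s

theorem blockWeight_pair {x y : ℤ} (h : x ≠ y) :
    blockWeight {x, y} = 4 * (x + y).natAbs + 2 * (x - y).natAbs := by
  rw [blockWeight, Finset.sum_pair h, Finset.sum_pair h, Finset.sum_pair h, Finset.sum_pair h]
  omega

theorem weight_sdiff_union_lt {N S T : Finset (Finset ℤ)} (hSN : S ⊆ N)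
    (h : weight T < weight S) : weight (N \ S ∪ T) < weight N := by
  have hunion : weight (N \ S ∪ T) + weight (N \ S ∩ T) = weight (N \ S) + weight T :=
    Finset.sum_union_inter
  have hsplit : weight (N \ S) + weight S = weight N := Finset.sum_sdiff hSN
  omega

theorem weight_lt_of_lessDot {X : Finset ℤ} {M N : Finset (Finset ℤ)} (hpos : ∀ x ∈ X, 0 < x)
    (h : LessDot X M N) : weight M < weight N := by
  rcases h with ⟨a, b, c, hab, -, hbc, hA, hB, hB', rfl⟩ |
    ⟨a, b, p, q, hab, -, -, hbp, hpq, hA, hA', hB, hB', -, rfl⟩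
  · have := hpos a hab.1
    have := hab.2.2.1
    refine weight_sdiff_union_lt (by simp [Finset.insert_subset_iff, *]) ?_
    rw [weight, weight, Finset.sum_insert (by simp [Finset.pair_eq_pair_iff]; omega),
      Finset.sum_pair (by simp [Finset.pair_eq_pair_iff]; omega),
      Finset.sum_insert (by simp [Finset.pair_eq_pair_iff]; omega),
      Finset.sum_pair (by simp [Finset.pair_eq_pair_iff]; omega)]
    repeat rw [blockWeight_pair (by omega)]
    omega
  · have := hpos a hab.1
    have := hab.2.2.1
    refine weight_sdiff_union_lt (by simp [Finset.insert_subset_iff, *]) ?_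
    rw [weight, weight, Finset.sum_insert (by simp [Finset.pair_eq_pair_iff]; omega),
      Finset.sum_insert (by simp [Finset.pair_eq_pair_iff]; omega),
      Finset.sum_pair (by simp [Finset.pair_eq_pair_iff]; omega),
      Finset.sum_insert (by simp [Finset.pair_eq_pair_iff]; omega),
      Finset.sum_insert (by simp [Finset.pair_eq_pair_iff]; omega),
      Finset.sum_pair (by simp [Finset.pair_eq_pair_iff]; omega)]
    repeat rw [blockWeight_pair (by omega)]
    omega

theorem weight_le_of_reflTransGen {X : Finset ℤ} {M N : Finset (Finset ℤ)}
    (hpos : ∀ x ∈ X, 0 < x) (h : Relation.ReflTransGen (LessDot X) M N) : weight M ≤ weight N := by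
  induction h with
  | refl => exact le_rfl
  | tail _ hstep ih => exact ih.trans (weight_lt_of_lessDot hpos hstep).le

theorem Finset.sdiff_sdiff_union_union {α : Type*} [DecidableEq α] {N P S T : Finset α}
    (hP : P ⊆ N) (hS : S ⊆ N \ P) : (N \ P) \ S ∪ T ∪ P = N \ S ∪ T := by
  ext d
  have := @hP d
  have := @hS d
  simp only [Finset.mem_union, Finset.mem_sdiff] at *
  tauto

theorem ConsecIn.union_left {X Y : Finset ℤ} {a b : ℤ} (h : ConsecIn X a b)
    (hY : ∀ y ∈ Y, y < a) : ConsecIn (Y ∪ X) a b := by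
  refine ⟨Finset.mem_union_right _ h.1, Finset.mem_union_right _ h.2.1, h.2.2.1, fun x hx => ?_⟩
  rcases Finset.mem_union.1 hx with hx | hx
  · exact fun h' => (hY x hx).not_gt h'.1
  · exact h.2.2.2 x hx

theorem LessDot.pair_union {X : Finset ℤ} {a b : ℤ} {M N : Finset (Finset ℤ)} (ha : 0 < a)
    (hab : a < b) (hb : ∀ x ∈ X, b < x) (hP : pairMatching a b ⊆ N)
    (h : LessDot X M (N \ pairMatching a b)) :
    LessDot ({a, b} ∪ X) (M ∪ pairMatching a b) N := by
  have hbelow : ∀ {x}, x ∈ X → ∀ y ∈ ({a, b} : Finset ℤ), y < x := fun hx y hy => by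
    have := hb _ hx
    simp only [Finset.mem_insert, Finset.mem_singleton] at hy
    omega
  rcases h with ⟨a', b', c, hc, hcX, hbc, h1, h2, h3, rfl⟩ |
    ⟨a', b', p, q, hc, hpX, hqX, hbp, hpq, h1, h2, h3, h4, hstr, rfl⟩
  · refine Or.inl ⟨a', b', c, hc.union_left (hbelow hc.1), Finset.mem_union_right _ hcX, hbc,
      (Finset.mem_sdiff.1 h1).1, (Finset.mem_sdiff.1 h2).1, (Finset.mem_sdiff.1 h3).1,
      Finset.sdiff_sdiff_union_union hP ?_⟩
    simp only [Finset.insert_subset_iff, Finset.singleton_subset_iff]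
    exact ⟨h1, h2, h3⟩
  · refine Or.inr ⟨a', b', p, q, hc.union_left (hbelow hc.1), Finset.mem_union_right _ hpX,
      Finset.mem_union_right _ hqX, hbp, hpq, (Finset.mem_sdiff.1 h1).1, (Finset.mem_sdiff.1 h2).1,
      (Finset.mem_sdiff.1 h3).1, (Finset.mem_sdiff.1 h4).1, ?_,
      Finset.sdiff_sdiff_union_union hP ?_⟩
    · rintro ⟨u, v, huv, hu, hua, hav⟩
      by_cases huvP : ({u, v} : Finset ℤ) ∈ pairMatching a b
      · have := hb a' hc.1
        simp only [pairMatching, Finset.mem_insert, Finset.mem_singleton] at huvP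
        rcases huvP with h | h <;>
          rcases Finset.pair_eq_pair_iff.1 h with ⟨rfl, rfl⟩ | ⟨rfl, rfl⟩ <;> omega
      · exact hstr ⟨u, v, Finset.mem_sdiff.2 ⟨huv, huvP⟩, hu, hua, hav⟩
    · simp only [Finset.insert_subset_iff, Finset.singleton_subset_iff]
      exact ⟨h1, h2, h3, h4⟩

namespace IsNCSP

variable {X : Finset ℤ} {M N : Finset (Finset ℤ)}

theorem eq_of_subset (hM : IsNCSP X M) (hN : IsNCSP X N) (h : M ⊆ N) : M = N := by
  refine Finset.Subset.antisymm h fun s hs => ?_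
  obtain ⟨u, v, -, rfl⟩ := hN.exists_eq_pair hs
  obtain ⟨t, ⟨ht, hut⟩, -⟩ := hM.2.2.1 u (hN.mem_or_neg_mem hs (by simp))
  exact hN.eq_of_mem_of_mem (h ht) hs hut (by simp) ▸ ht

theorem exists_pos_partner (hpos : ∀ x ∈ X, 0 < x) (hN : IsNCSP X N) {x : ℤ} (hx : x ∈ X)
    (hxN : ({-x, x} : Finset ℤ) ∉ N) : ∃ y ∈ X, y ≠ x ∧ ({x, y} : Finset ℤ) ∈ N := by
  obtain ⟨y, hyx, hy⟩ := hN.exists_partner hx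
  rcases hN.mem_or_neg_mem hy (by simp : y ∈ ({x, y} : Finset ℤ)) with hyX | hyX
  · exact ⟨y, hyX, hyx, hy⟩
  · have := hpos _ hyX
    obtain rfl := hN.eq_neg_of_neg_of_pos (Finset.pair_comm x y ▸ hy) (by omega) (hpos x hx)
    exact absurd (Finset.pair_comm (-y) y ▸ hy) (by simpa using hxN)

/-- Otherwise the least nontrivial element above a trivial one has a trivial predecessor, and the
two give a move (i). -/
theorem lt_of_forall_not_move1 (hpos : ∀ x ∈ X, 0 < x) (hN : IsNCSP X N)
    (hmin : ∀ M, ¬Move1 X M N) {t y : ℤ} (ht : t ∈ X) (htN : ({-t, t} : Finset ℤ) ∈ N)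
    (hy : y ∈ X) (hyN : ({-y, y} : Finset ℤ) ∉ N) : y < t := by
  by_contra hty
  have hyU : y ∈ X.filter fun z => t < z ∧ ({-z, z} : Finset ℤ) ∉ N :=
    Finset.mem_filter.2 ⟨hy, lt_of_le_of_ne (not_lt.1 hty) fun h => hyN (h ▸ htN), hyN⟩
  set y₀ := (X.filter fun z => t < z ∧ ({-z, z} : Finset ℤ) ∉ N).min' ⟨y, hyU⟩ with hy₀
  obtain ⟨hy₀X, hty₀, hy₀N⟩ := Finset.mem_filter.1 (Finset.min'_mem _ ⟨y, hyU⟩)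
  rw [← hy₀] at hy₀X hty₀ hy₀N
  have htL : t ∈ X.filter (· < y₀) := Finset.mem_filter.2 ⟨ht, hty₀⟩
  set t₀ := (X.filter (· < y₀)).max' ⟨t, htL⟩ with ht₀
  obtain ⟨ht₀X, ht₀y₀⟩ := Finset.mem_filter.1 (Finset.max'_mem _ ⟨t, htL⟩)
  rw [← ht₀] at ht₀X ht₀y₀
  have htt₀ : t ≤ t₀ := Finset.le_max' _ t htL
  have hcons : ConsecIn X t₀ y₀ := ⟨ht₀X, hy₀X, ht₀y₀, fun x hx h =>
    (Finset.le_max' _ x (Finset.mem_filter.2 ⟨hx, h.2⟩)).not_gt h.1⟩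
  have ht₀N : ({-t₀, t₀} : Finset ℤ) ∈ N := by
    by_contra h
    have : y₀ ≤ t₀ := Finset.min'_le _ t₀
      (Finset.mem_filter.2 ⟨ht₀X, lt_of_le_of_ne htt₀ fun e => h (e ▸ htN), h⟩)
    omega
  obtain ⟨w, hwX, hwy, hw⟩ := hN.exists_pos_partner hpos hy₀X hy₀N
  have hw₀ := hpos w hwX
  have hwt₀ : w ≠ t₀ := by
    intro e
    have hblock := hN.eq_of_mem_of_mem hw ht₀N (w := t₀) (by simp [e]) (by simp)
    have : y₀ ∈ ({-t₀, t₀} : Finset ℤ) := hblock ▸ by simp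
    simp only [Finset.mem_insert, Finset.mem_singleton] at this
    omega
  have hnest : ¬(-t₀ < w ∧ w < t₀) := fun h => by
    have := hN.lt_and_lt_of_lt_of_lt ht₀N (Finset.pair_comm y₀ w ▸ hw) h.1 h.2
    omega
  have := hcons.2.2.2 w hwX
  exact hmin _ ⟨t₀, y₀, w, hcons, hwX, by omega, ht₀N, hw, hN.neg_mem hw, rfl⟩

variable {a b : ℤ}

theorem not_trivial_of_forall_not_move1 (hpos : ∀ x ∈ {a, b} ∪ X, 0 < x)
    (hN : IsNCSP ({a, b} ∪ X) N) (hmin : ∀ M, ¬Move1 ({a, b} ∪ X) M N) (hab : a < b)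
    (hb : ∀ x ∈ X, b < x) (hk : trivCount ({a, b} ∪ X) N ≤ X.card) :
    ({-a, a} : Finset ℤ) ∉ N ∧ ({-b, b} : Finset ℤ) ∉ N := by
  have hbN : ({-b, b} : Finset ℤ) ∉ N := by
    intro hbN
    have hsub : insert b X ⊆ ({a, b} ∪ X).filter fun x => ({-x, x} : Finset ℤ) ∈ N := by
      intro y hy
      rw [Finset.mem_filter]
      rcases Finset.mem_insert.1 hy with rfl | hy
      · exact ⟨by simp, hbN⟩
      · refine ⟨Finset.mem_union_right _ hy, not_not.1 fun hyN => ?_⟩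
        have := hN.lt_of_forall_not_move1 hpos hmin (by simp) hbN (Finset.mem_union_right _ hy) hyN
        exact (hb y hy).not_gt this
    have := Finset.card_le_card hsub
    rw [Finset.card_insert_of_notMem fun h => (hb b h).false] at this
    exact absurd hk (by rw [trivCount]; omega)
  refine ⟨fun haN => hbN (not_not.1 fun hbN' => ?_), hbN⟩
  exact hab.not_gt (hN.lt_of_forall_not_move1 hpos hmin (by simp) haN (by simp) hbN')

theorem pair_mem_of_forall_not_move2 (hpos : ∀ x ∈ {a, b} ∪ X, 0 < x)
    (hN : IsNCSP ({a, b} ∪ X) N) (hmin : ∀ M, ¬Move2 ({a, b} ∪ X) M N) (hab : a < b)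
    (hb : ∀ x ∈ X, b < x) (haN : ({-a, a} : Finset ℤ) ∉ N) (hbN : ({-b, b} : Finset ℤ) ∉ N) :
    ({a, b} : Finset ℤ) ∈ N := by
  have hmem : ∀ x ∈ {a, b} ∪ X, x = a ∨ x = b ∨ b < x := by
    simp only [Finset.mem_union, Finset.mem_insert, Finset.mem_singleton]
    rintro x ((rfl | rfl) | hx)
    exacts [Or.inl rfl, Or.inr (Or.inl rfl), Or.inr (Or.inr (hb x hx))]
  obtain ⟨q, hqX, hqa, hq⟩ := hN.exists_pos_partner hpos (by simp : a ∈ {a, b} ∪ X) haN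
  rcases hmem q hqX with rfl | rfl | hbq
  · exact absurd rfl hqa
  · exact hq
  obtain ⟨p, hpX, hpb, hp⟩ := hN.exists_pos_partner hpos (by simp : b ∈ {a, b} ∪ X) hbN
  have hpa : p ≠ a := fun e => by
    have := hN.eq_of_mem_of_mem hp hq (w := a) (by simp [e]) (by simp)
    rcases Finset.pair_eq_pair_iff.1 this with ⟨h1, h2⟩ | ⟨h1, h2⟩ <;> omega
  have hbp : b < p := by rcases hmem p hpX with h | h | h <;> omega
  have hpq : p < q := by
    rcases lt_trichotomy p q with h | rfl | h
    · exact h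
    · have := hN.eq_of_mem_of_mem hp hq (w := p) (by simp) (by simp)
      rcases Finset.pair_eq_pair_iff.1 this with ⟨h1, h2⟩ | ⟨h1, h2⟩ <;> omega
    · exact (hN.not_crosses hq hp ⟨a, b, q, p, hab, hbq, h, rfl, rfl⟩).elim
  refine (hmin _ ⟨a, b, p, q, consecIn_pair_union hab hb, hpX, hqX, hbp, hpq, hq, hN.neg_mem hq,
    hp, hN.neg_mem hp, ?_, rfl⟩).elim
  rintro ⟨u, v, huv, hu, hua, -⟩
  have huX : u ∈ {a, b} ∪ X := by
    rcases hN.mem_or_neg_mem huv (by simp : u ∈ ({u, v} : Finset ℤ)) with h | h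
    · exact h
    · have := hpos _ h; omega
  rcases hmem u huX with h | h | h <;> omega

end IsNCSP

theorem IsNCSP.eq_Mmin_of_forall_not_lessDot {X : Finset ℤ} {N : Finset (Finset ℤ)} {k n : ℕ}
    (hpos : ∀ x ∈ X, 0 < x) (hN : IsNCSP X N) (htc : trivCount X N = k)
    (hcard : X.card = k + 2 * n) (hmin : ∀ M, ¬LessDot X M N) : N = Mmin X k := by
  induction n generalizing X N with
  | zero =>
    have hall : ∀ x ∈ X, ({-x, x} : Finset ℤ) ∈ N :=
      Finset.card_filter_eq_iff.1 (by rw [← trivCount, htc, hcard, mul_zero, add_zero])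
    rw [Mmin_of_card_eq (by omega)]
    refine ((isNCSP_and_trivCount_image hpos).1.eq_of_subset hN fun s hs => ?_).symm
    obtain ⟨x, hx, rfl⟩ := Finset.mem_image.1 hs
    exact hall x hx
  | succ n ih =>
    obtain ⟨a, b, X, hab, hb, rfl, hcard'⟩ := Finset.exists_eq_pair_union (X := X) (by omega)
    have ha : 0 < a := hpos a (by simp)
    have hdisj := disjoint_pair_of_lt hab hb
    obtain ⟨haN, hbN⟩ := hN.not_trivial_of_forall_not_move1 hpos
      (fun M h => hmin M (Or.inl h)) hab hb (by omega)
    have habN := hN.pair_mem_of_forall_not_move2 hpos (fun M h => hmin M (Or.inr h)) hab hb haN hbN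
    have hP : pairMatching a b ⊆ N := by
      simp [pairMatching, Finset.insert_subset_iff, habN, hN.neg_mem habN]
    have hPN := isNCSP_pairMatching ha hab
    have hrest := hN.sdiff hpos hdisj hPN hP
    have htc' : trivCount X (N \ pairMatching a b) = k := by
      have := trivCount_union hpos hdisj hPN hrest
      rw [Finset.union_sdiff_of_subset hP, htc, trivCount_pairMatching ha hab] at this
      omega
    have := ih (fun x hx => hpos x (Finset.mem_union_right _ hx)) hrest htc' (by omega)
      fun M hM => hmin _ (hM.pair_union ha hab hb hP)
    rw [Mmin_pair_union hab hb (by omega), ← this, Finset.union_sdiff_of_subset hP]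

theorem reflTransGen_Mmin {X : Finset ℤ} {N : Finset (Finset ℤ)} {k n : ℕ}
    (hpos : ∀ x ∈ X, 0 < x) (hcard : X.card = k + 2 * n) (hN : IsNCSP X N)
    (htc : trivCount X N = k) : Relation.ReflTransGen (LessDot X) (Mmin X k) N := by
  induction hw : weight N using Nat.strong_induction_on generalizing N with
  | _ w ih =>
  by_cases hmove : ∃ M, LessDot X M N
  · obtain ⟨M, hM⟩ := hmove
    obtain ⟨hMN, htcM⟩ := hM.isNCSP_and_trivCount_eq hpos hN
    exact (ih _ (hw ▸ weight_lt_of_lessDot hpos hM) hMN (htcM.trans htc) rfl).tail hM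
  · rw [hN.eq_Mmin_of_forall_not_lessDot hpos htc hcard (not_exists.1 hmove)]

theorem eq_of_reflTransGen_lessDot {X : Finset ℤ} {M N : Finset (Finset ℤ)}
    (hpos : ∀ x ∈ X, 0 < x) (hMN : Relation.ReflTransGen (LessDot X) M N)
    (hNM : Relation.ReflTransGen (LessDot X) N M) : M = N := by
  rcases hMN.cases_head with rfl | ⟨M', hM, hM'N⟩
  · rfl
  · have := weight_lt_of_lessDot hpos hM
    have := weight_le_of_reflTransGen hpos hM'N
    have := weight_le_of_reflTransGen hpos hNM
    omega

/-- The transitive closure of `⋖` is a partial order on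
`NCSP(X : k)` with unique minimal element `M_min(X : k)`. -/
theorem stmt15 (X : Finset ℤ) (hpos : ∀ x ∈ X, 0 < x) (k : ℕ) (hk : k ≤ X.card)
    (heven : Even (X.card - k)) :
    (IsNCSP X (Mmin X k) ∧ trivCount X (Mmin X k) = k) ∧
    (∀ M N : Finset (Finset ℤ),
      IsNCSP X M → trivCount X M = k → IsNCSP X N → trivCount X N = k →
      Relation.ReflTransGen (LessDot X) M N → Relation.ReflTransGen (LessDot X) N M →
      M = N) ∧
    (∀ N : Finset (Finset ℤ), IsNCSP X N → trivCount X N = k →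
      Relation.ReflTransGen (LessDot X) (Mmin X k) N) := by
  obtain ⟨n, hn⟩ := heven
  have hcard : X.card = k + 2 * n := by omega
  exact ⟨isNCSP_and_trivCount_Mmin hpos hcard,
    fun M N _ _ _ _ hMN hNM => eq_of_reflTransGen_lessDot hpos hMN hNM,
    fun N hN htc => reflTransGen_Mmin hpos hcard hN htc⟩
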